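/- Let t be a sh̄-normal term. (1) Uniqueness: if π is a derivation of ⊢ t : 0 (empty environment, empty type) and π' is a derivation of Γ ⊢ t : 0, then t is a value, |π| = 0, dom(Γ) = ∅ and π = π'. (2) Characterization: for any suitable list x⃗ = (x_1,…,x_k) of variables for t, the following are equivalent: t is a value; ((0,…,0), 0) ∈ ⟦t⟧_x⃗; there is a derivation of ⊢ t : 0; there is a derivation π typing t with |π| = 0. -/

import Mathlib

/-! Terms of the shuffling calculus λ_sh. -/

inductive Term : Type
  | var : ℕ → Term
  | lam : ℕ → Term → Term
  | app : Term → Term → Term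
deriving DecidableEq

namespace Term

/-- Values: variables and abstractions. -/
inductive IsValue : Term → Prop
  | var (x : ℕ) : IsValue (var x)
  | lam (x : ℕ) (t : Term) : IsValue (lam x t)

/-- Free variables. -/
def fv : Term → Finset ℕ
  | var x => {x}
  | lam x t => fv t \ {x}
  | app t u => fv t ∪ fv u

/-- Substitution of `v` for the free occurrences of `x` in a term. -/
def subst : Term → ℕ → Term → Term
  | var y, x, v => if y = x then v else var y
  | lam y t, x, v => if y = x then lam y t else lam y (subst t x v)
  | app t u, x, v => app (subst t x v) (subst u x v)

end Term

open Term

/-- The β_v root step: (λx.t)v ↦ t{v/x} for v a value. -/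
inductive RootBeta : Term → Term → Prop
  | red (x : ℕ) (t v : Term) : IsValue v →
      RootBeta (.app (.lam x t) v) (t.subst x v)

/-- The σ1 root step: ((λx.t)u)s ↦ ((λx.t s))u with x ∉ FV(s). -/
inductive RootSigma1 : Term → Term → Prop
  | red (x : ℕ) (t u s : Term) : x ∉ s.fv →
      RootSigma1 (.app (.app (.lam x t) u) s) (.app (.lam x (.app t s)) u)

/-- The σ3 root step: v((λx.s)u) ↦ ((λx.v s))u for v a value with x ∉ FV(v). -/
inductive RootSigma3 : Term → Term → Prop
  | red (x : ℕ) (v s u : Term) : IsValue v → x ∉ v.fv →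
      RootSigma3 (.app v (.app (.lam x s) u)) (.app (.lam x (.app v s)) u)

/-- σ = σ1 ∪ σ3. -/
def RootSigma (t u : Term) : Prop := RootSigma1 t u ∨ RootSigma3 t u

/-- sh = β_v ∪ σ. -/
def RootSh (t u : Term) : Prop := RootBeta t u ∨ RootSigma t u

/-- Closure of a root step under arbitrary one-hole contexts
    C ::= ⟨·⟩ | λx.C | C t | t C. -/
inductive FStep (r : Term → Term → Prop) : Term → Term → Prop
  | root {t t'} : r t t' → FStep r t t'
  | lam {t t'} (x : ℕ) : FStep r t t' → FStep r (.lam x t) (.lam x t')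
  | appL {t t'} (u : Term) : FStep r t t' → FStep r (.app t u) (.app t' u)
  | appR {u u'} (t : Term) : FStep r u u' → FStep r (.app t u) (.app t u')

/-- Closure of a root step under balanced contexts
    B ::= ⟨·⟩ | (λx.B)t | B t | t B. -/
inductive BStep (r : Term → Term → Prop) : Term → Term → Prop
  | root {t t'} : r t t' → BStep r t t'
  | lamApp {t t'} (x : ℕ) (u : Term) : BStep r t t' →
      BStep r (.app (.lam x t) u) (.app (.lam x t') u)
  | appL {t t'} (u : Term) : BStep r t t' → BStep r (.app t u) (.app t' u)
  | appR {u u'} (t : Term) : BStep r u u' → BStep r (.app t u) (.app t u')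

/-- `t` is normal for the reduction `r`. -/
def NormalFor (r : Term → Term → Prop) (t : Term) : Prop := ∀ u, ¬ r t u

/-- `t` is `r`-normalizable. -/
def Normalizable (r : Term → Term → Prop) (t : Term) : Prop :=
  ∃ u, Relation.ReflTransGen r t u ∧ NormalFor r u

/-- `t` is strongly `r`-normalizable: no infinite `r`-sequence from `t`. -/
def StronglyNormalizable (r : Term → Term → Prop) (t : Term) : Prop :=
  Acc (fun a b => r b a) t

/-- Confluence of a reduction. -/
def Confluent (r : Term → Term → Prop) : Prop :=
  ∀ a b c, Relation.ReflTransGen r a b → Relation.ReflTransGen r a c →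
    ∃ d, Relation.ReflTransGen r b d ∧ Relation.ReflTransGen r c d

/-- Strong normalization of a reduction. -/
def StronglyNormalizing (r : Term → Term → Prop) : Prop :=
  WellFounded (fun a b => r b a)

/-! The sets Λ_a and Λ_n: a ::= x v | x a | a n and n ::= v | a | (λx.n)a. -/

mutual
  inductive LamA : Term → Prop
    | varVal (x : ℕ) (v : Term) : IsValue v → LamA (.app (.var x) v)
    | varA (x : ℕ) (a : Term) : LamA a → LamA (.app (.var x) a)
    | appAN (a n : Term) : LamA a → LamN n → LamA (.app a n)
  inductive LamN : Term → Prop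
    | val (v : Term) : IsValue v → LamN v
    | ofA (a : Term) : LamA a → LamN a
    | redex (x : ℕ) (n a : Term) : LamN n → LamA a → LamN (.app (.lam x n) a)
end

/-! Positive types: finite multisets (represented as lists) of pairs of
    positive types. -/

inductive PType : Type
  | node : List (PType × PType) → PType

namespace PType

/-- The empty positive type 0. -/
def zero : PType := node []

/-- Multiset union of positive types. -/
def union : PType → PType → PType
  | node l, node l' => node (l ++ l')

/-- Union of a list of positive types. -/
def listUnion (l : List PType) : PType := l.foldr union zero

end PType

/-- Type environments: maps from variables to positive types. -/
def Env : Type := ℕ → PType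

namespace Env

/-- The empty environment. -/
def zero : Env := fun _ => PType.zero

/-- The environment x : P. -/
def single (x : ℕ) (P : PType) : Env := fun y => if y = x then P else PType.zero

/-- Pointwise multiset union of environments. -/
def union (Γ Δ : Env) : Env := fun y => (Γ y).union (Δ y)

/-- `Γ, x : P` : reassign `x` to `P` in `Γ`. -/
def update (Γ : Env) (x : ℕ) (P : PType) : Env := fun y => if y = x then P else Γ y

/-- Union of a list of environments. -/
def listUnion (l : List Env) : Env := fun y => PType.listUnion (l.map (fun Γ => Γ y))

/-- Domain of an environment. -/
def dom (Γ : Env) : Set ℕ := {x | Γ x ≠ PType.zero}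

end Env

/-! Type derivations of the non-idempotent intersection type system.
    The n-ary λ-rule is presented via the two constructors `lamNil`
    (no premises) and `lamCons` (one more premise). -/

inductive Deriv : Env → Term → PType → Type
  | ax (x : ℕ) (P : PType) : Deriv (Env.single x P) (.var x) P
  | lamNil (x : ℕ) (t : Term) : Deriv Env.zero (.lam x t) PType.zero
  | lamCons {Γ Δ : Env} {x : ℕ} {t : Term} {P Q : PType} {L : List (PType × PType)} :
      Deriv (Γ.update x P) t Q → Deriv Δ (.lam x t) (.node L) →
      Deriv ((Γ.update x PType.zero).union Δ) (.lam x t) (.node ((P, Q) :: L))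
  | app {Γ Δ : Env} {t u : Term} {P Q : PType} :
      Deriv Γ t (.node [(P, Q)]) → Deriv Δ u P →
      Deriv (Γ.union Δ) (.app t u) Q

/-- The size of a derivation: its number of @-rules. -/
def Deriv.size {Γ : Env} {t : Term} {P : PType} : Deriv Γ t P → ℕ
  | .ax _ _ => 0
  | .lamNil _ _ => 0
  | .lamCons d₁ d₂ => d₁.size + d₂.size
  | .app d₁ d₂ => d₁.size + d₂.size + 1

/-- The environment x_1 : P_1, …, x_k : P_k. -/
def envOfLists : List ℕ → List PType → Env
  | x :: xs, P :: Ps => (Env.single x P).union (envOfLists xs Ps)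
  | _, _ => Env.zero

/-- A list of (pairwise distinct) variables suitable for `t`. -/
def Suitable (xs : List ℕ) (t : Term) : Prop :=
  xs.Nodup ∧ ∀ x ∈ t.fv, x ∈ xs

/-- Relational semantics of `t` with respect to the list of variables `xs`. -/
def sem (xs : List ℕ) (t : Term) : Set (List PType × PType) :=
  { p | p.1.length = xs.length ∧ Nonempty (Deriv (envOfLists xs p.1) t p.2) }

/-- The set of sizes of typing derivations for `t`. -/
def derivSizes (t : Term) : Set ℕ :=
  { n | ∃ (Γ : Env) (Q : PType) (π : Deriv Γ t Q), π.size = n }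

/-- The size ⌊t⌋ of a sh̄-normal term. -/
def nsize : Term → ℕ
  | .var _ => 0
  | .lam _ _ => 0
  | .app (.lam _ n) u => nsize n + nsize u + 1
  | .app t u => nsize t + nsize u + 1

/-- sh̄-reduction sequences from `t` to `u` with exactly `k` β_v-steps. -/
inductive ShSeq : Term → Term → ℕ → Prop
  | refl (t : Term) : ShSeq t t 0
  | beta {t t' u : Term} {k : ℕ} : BStep RootBeta t t' → ShSeq t' u k →
      ShSeq t u (k + 1)
  | sigma {t t' u : Term} {k : ℕ} : BStep RootSigma t t' → ShSeq t' u k →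
      ShSeq t u k

theorem PType.union_eq_zero_iff {P Q : PType} :
    P.union Q = PType.zero ↔ P = PType.zero ∧ Q = PType.zero := by
  cases P
  cases Q
  simp [PType.union, PType.zero]

namespace Env

theorem union_eq_zero {Γ Δ : Env} (h : Γ.union Δ = Env.zero) :
    Γ = Env.zero ∧ Δ = Env.zero :=
  ⟨funext fun y => (PType.union_eq_zero_iff.mp (congrFun h y)).1,
    funext fun y => (PType.union_eq_zero_iff.mp (congrFun h y)).2⟩

theorem single_zero (x : ℕ) : Env.single x PType.zero = Env.zero := by
  funext y
  simp [Env.single, Env.zero]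

theorem single_ne_zero {x : ℕ} {P : PType} (hP : P ≠ PType.zero) :
    Env.single x P ≠ Env.zero :=
  fun h => hP (by simpa [Env.single, Env.zero] using congrFun h x)

theorem dom_zero : Env.zero.dom = ∅ :=
  Set.eq_empty_iff_forall_notMem.mpr fun _ hy => hy rfl

end Env

theorem envOfLists_replicate_zero :
    ∀ xs : List ℕ, envOfLists xs (List.replicate xs.length PType.zero) = Env.zero
  | [] => rfl
  | x :: xs => by
    simp only [List.length_cons, List.replicate_succ, envOfLists,
      envOfLists_replicate_zero xs, Env.single_zero]
    funext y
    rfl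

theorem NormalFor.of_app_left {r : Term → Term → Prop} {t u : Term}
    (h : NormalFor (BStep r) (.app t u)) : NormalFor (BStep r) t :=
  fun _ ht => h _ (.appL u ht)

theorem NormalFor.of_app_right {r : Term → Term → Prop} {t u : Term}
    (h : NormalFor (BStep r) (.app t u)) : NormalFor (BStep r) u :=
  fun _ hu => h _ (.appR t hu)

namespace Deriv

theorem isValue_of_size_eq_zero {Γ : Env} {t : Term} {Q : PType}
    (π : Deriv Γ t Q) (h : π.size = 0) : t.IsValue := by
  cases π with
  | ax x _ => exact .var x
  | lamNil x b => exact .lam x b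
  | lamCons _ _ => exact .lam _ _
  | app _ _ => simp [Deriv.size] at h

/-- In an application `t u` typed in the empty environment, both sides are values by
induction; a head variable would get the non-empty type `[⟨P, Q⟩]` in the environment, and a
head abstraction would make `t u` a β_v-redex. -/
theorem isValue_of_env_eq_zero {Γ : Env} {t : Term} {Q : PType} (π : Deriv Γ t Q)
    (hΓ : Γ = Env.zero) (hnf : NormalFor (BStep RootSh) t) : t.IsValue := by
  induction π with
  | ax x _ => exact .var x
  | lamNil x b => exact .lam x b
  | lamCons _ _ => exact .lam _ _
  | app π₁ _ ih₁ ih₂ =>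
    obtain ⟨hΓ₁, hΓ₂⟩ := Env.union_eq_zero hΓ
    have hu := ih₂ hΓ₂ hnf.of_app_right
    cases ih₁ hΓ₁ hnf.of_app_left with
    | var x =>
      cases π₁
      exact absurd hΓ₁ (Env.single_ne_zero (by simp [PType.zero]))
    | lam x b => exact absurd (BStep.root (Or.inl (RootBeta.red x b _ hu))) (hnf _)

theorem env_eq_zero_of_isValue {Γ : Env} {t : Term} (ht : t.IsValue)
    (π : Deriv Γ t PType.zero) : Γ = Env.zero := by
  cases ht <;> cases π
  · exact Env.single_zero _
  · rfl

theorem size_eq_zero_of_isValue {Γ : Env} {t : Term} (ht : t.IsValue)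
    (π : Deriv Γ t PType.zero) : π.size = 0 := by
  cases ht <;> cases π <;> rfl

theorem heq_of_isValue {Γ Γ' : Env} {t : Term} (ht : t.IsValue)
    (π : Deriv Γ t PType.zero) (π' : Deriv Γ' t PType.zero) : HEq π π' := by
  cases ht <;> cases π <;> cases π' <;> rfl

theorem nonempty_of_isValue {t : Term} (ht : t.IsValue) :
    Nonempty (Deriv Env.zero t PType.zero) := by
  cases ht with
  | var x => exact ⟨Env.single_zero x ▸ .ax x PType.zero⟩
  | lam x b => exact ⟨.lamNil x b⟩

end Deriv

/-- uniqueness of the derivation with empty types and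
    logical/semantic characterization of values among sh̄-normal forms. -/
theorem empty_type_derivation_unique_and_value_characterization (t : Term)
    (hnf : NormalFor (BStep RootSh) t) :
    (∀ (Γ : Env) (π : Deriv Env.zero t PType.zero)
        (π' : Deriv Γ t PType.zero),
      Term.IsValue t ∧ π.size = 0 ∧ Env.dom Γ = ∅ ∧ HEq π π') ∧
    (∀ xs : List ℕ, Suitable xs t →
      [ Term.IsValue t,
        (List.replicate xs.length PType.zero, PType.zero) ∈ sem xs t,
        Nonempty (Deriv Env.zero t PType.zero),
        ∃ (Γ : Env) (Q : PType) (π : Deriv Γ t Q), π.size = 0 ].TFAE) := by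
  refine ⟨fun Γ π π' => ?_, fun xs _ => ?_⟩
  · have ht := π.isValue_of_env_eq_zero rfl hnf
    refine ⟨ht, π.size_eq_zero_of_isValue ht, ?_, π.heq_of_isValue ht π'⟩
    rw [π'.env_eq_zero_of_isValue ht, Env.dom_zero]
  · tfae_have 1 → 3 := Deriv.nonempty_of_isValue
    tfae_have 3 → 1 := fun ⟨π⟩ => π.isValue_of_env_eq_zero rfl hnf
    tfae_have 2 ↔ 3 := by
      simp only [sem, Set.mem_ofPred_eq, List.length_replicate, envOfLists_replicate_zero,
        true_and]
    tfae_have 3 → 4 := fun ⟨π⟩ =>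
      ⟨_, _, π, π.size_eq_zero_of_isValue (π.isValue_of_env_eq_zero rfl hnf)⟩
    tfae_have 4 → 1 := fun ⟨_, _, π, hπ⟩ => π.isValue_of_size_eq_zero hπ
    tfae_finish
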